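/- arXiv:2108.12997 — 2 statements merged into one kernel-verified Lean document; each statement's English description precedes it below -/
import Mathlib

section
/- For every n ≥ 2, the sawtooth function g_n on [0,π] (defined by g_n(2kπ/(2n+3)) = (−1)^k for 0 ≤ k ≤ n+1, g_n(π) = 0, and piecewise linear in between) satisfies g_n(θ)·cos((n+3/2)θ) ≥ g_n(θ)² ≥ 0 for all θ in each interval I_k = [2kπ/(2n+3), 2(k+1)π/(2n+3)], k ∈ {0,…,n}. -/
/-!
On the `k`-th interval write `θ = (k + s)·2π/(2n+3)` with `s ∈ [0, 1]`. There the sawtooth equals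
`(-1)^k (1 - 2s)` and `cos((n + 3/2)θ) = (-1)^k cos(πs) = (-1)^k sin(π/2 · (1 - 2s))`, so the signs
cancel and the claim becomes `u² ≤ u sin(πu/2)` for `u = 1 - 2s ∈ [-1, 1]`, which is Jordan's
inequality `u ≤ sin(πu/2)` on `[0, 1]` together with oddness of `sin`.
-/

open Real

/-- The sawtooth function `g_n` on `[0, π]`: piecewise linear with value `(-1)^k`
at the node `2kπ/(2n+3)` for `0 ≤ k ≤ n+1`, and value `0` at `π`. -/
noncomputable def sawtooth (n : ℕ) (θ : ℝ) : ℝ :=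
  if θ ≤ (n + 1) * (2 * Real.pi / (2 * n + 3)) then
    (-1 : ℝ) ^ ⌊θ / (2 * Real.pi / (2 * n + 3))⌋ *
      (1 - 2 * (θ / (2 * Real.pi / (2 * n + 3)) - ⌊θ / (2 * Real.pi / (2 * n + 3))⌋))
  else (-1 : ℝ) ^ (n + 1) * ((Real.pi - θ) / (Real.pi / (2 * n + 3)))

theorem sq_le_mul_sin_pi_div_two_mul {u : ℝ} (h0 : -1 ≤ u) (h1 : u ≤ 1) :
    u ^ 2 ≤ u * sin (π / 2 * u) := by
  rcases le_total 0 u with hu | hu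
  · nlinarith [le_sin_mul hu h1]
  · have := le_sin_mul (neg_nonneg.2 hu) (by linarith)
    rw [mul_neg, sin_neg] at this
    nlinarith

theorem sq_le_mul_cos_pi_mul {s : ℝ} (h0 : 0 ≤ s) (h1 : s ≤ 1) :
    (1 - 2 * s) ^ 2 ≤ (1 - 2 * s) * cos (π * s) := by
  have hcos : cos (π * s) = sin (π / 2 * (1 - 2 * s)) := by
    rw [← cos_pi_div_two_sub]; ring_nf
  rw [hcos]
  exact sq_le_mul_sin_pi_div_two_mul (by linarith) (by linarith)

/-- At the right end `s = 1` the floor jumps to `k + 1`, but both branches give `-(-1)^k`. -/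
theorem neg_one_zpow_floor_mul_one_sub_two_fract (k : ℤ) {s : ℝ} (h0 : 0 ≤ s) (h1 : s ≤ 1) :
    (-1 : ℝ) ^ ⌊k + s⌋ * (1 - 2 * (k + s - ⌊k + s⌋)) = (-1) ^ k * (1 - 2 * s) := by
  rcases h1.lt_or_eq with h1 | rfl
  · have hfloor : ⌊(k : ℝ) + s⌋ = k := by
      rw [Int.floor_eq_iff]; constructor <;> linarith
    rw [hfloor]; ring
  · have hfloor : ⌊(k : ℝ) + 1⌋ = k + 1 := by exact_mod_cast Int.floor_intCast (k + 1)
    rw [hfloor, zpow_add₀ (by norm_num)]; push_cast; ring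

theorem sawtooth_nat_add_mul (n k : ℕ) (hk : k ≤ n) {s : ℝ} (h0 : 0 ≤ s) (h1 : s ≤ 1) :
    sawtooth n ((k + s) * (2 * π / (2 * n + 3))) = (-1) ^ k * (1 - 2 * s) := by
  have hstep : 0 < 2 * π / (2 * n + 3) := by positivity
  have hnode : (k + s) * (2 * π / (2 * n + 3)) ≤ (n + 1) * (2 * π / (2 * n + 3)) := by
    gcongr
  rw [sawtooth, if_pos hnode, mul_div_cancel_right₀ _ hstep.ne']
  exact_mod_cast neg_one_zpow_floor_mul_one_sub_two_fract k h0 h1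

theorem cos_mul_nat_add_mul (n k : ℕ) (s : ℝ) :
    cos ((n + 3 / 2) * ((k + s) * (2 * π / (2 * n + 3)))) = (-1) ^ k * cos (π * s) := by
  have harg : ((n : ℝ) + 3 / 2) * ((k + s) * (2 * π / (2 * n + 3))) = π * s + k * π := by
    field_simp; ring
  rw [harg, cos_add_nat_mul_pi]

theorem sawtooth_mul_cos_ge_sq_general (n : ℕ) (k : ℕ) (hk : k ≤ n) (θ : ℝ)
    (hθ : θ ∈ Set.Icc (2 * k * Real.pi / (2 * n + 3)) (2 * (k + 1) * Real.pi / (2 * n + 3))) :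
    sawtooth n θ * Real.cos ((n + 3 / 2) * θ) ≥ sawtooth n θ ^ 2 ∧
      sawtooth n θ ^ 2 ≥ 0 := by
  have hstep : 0 < 2 * π / (2 * n + 3) := by positivity
  set s := θ / (2 * π / (2 * n + 3)) - k
  have hθs : θ = (k + s) * (2 * π / (2 * n + 3)) := by
    simp only [s, add_sub_cancel, div_mul_cancel₀ _ hstep.ne']
  have hnode (j : ℝ) : 2 * j * π / (2 * n + 3) = j * (2 * π / (2 * n + 3)) := by ring
  obtain ⟨hlo, hhi⟩ := hθ
  rw [hnode, hθs] at hlo hhi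
  have hs0 : 0 ≤ s := by linarith [le_of_mul_le_mul_right hlo hstep]
  have hs1 : s ≤ 1 := by linarith [le_of_mul_le_mul_right hhi hstep]
  have hsign : ((-1 : ℝ) ^ k) ^ 2 = 1 := by rw [← pow_mul, mul_comm, pow_mul, neg_one_sq, one_pow]
  rw [hθs, sawtooth_nat_add_mul n k hk hs0 hs1, cos_mul_nat_add_mul]
  refine ⟨?_, sq_nonneg _⟩
  calc (-1 : ℝ) ^ k * (1 - 2 * s) * ((-1) ^ k * cos (π * s))
      = (1 - 2 * s) * cos (π * s) := by linear_combination ((1 - 2 * s) * cos (π * s)) * hsign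
    _ ≥ (1 - 2 * s) ^ 2 := sq_le_mul_cos_pi_mul hs0 hs1
    _ = ((-1) ^ k * (1 - 2 * s)) ^ 2 := by linear_combination (-(1 - 2 * s) ^ 2) * hsign

theorem sawtooth_mul_cos_ge_sq (n : ℕ) (hn : 2 ≤ n) (k : ℕ) (hk : k ≤ n) (θ : ℝ)
    (hθ : θ ∈ Set.Icc (2 * k * Real.pi / (2 * n + 3)) (2 * (k + 1) * Real.pi / (2 * n + 3))) :
    sawtooth n θ * Real.cos ((n + 3 / 2) * θ) ≥ sawtooth n θ ^ 2 ∧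
      sawtooth n θ ^ 2 ≥ 0 :=
  sawtooth_mul_cos_ge_sq_general n k hk θ hθ
end

section
/- For n ≥ 2 and 0 ≤ k ≤ n, ∫_{I_k} g_n(θ)·cos((n+3/2)θ)·cos(θ/2) dθ ≥ (2π/(3(2n+3)))·cos((k+1)π/(2n+3)), where I_k = [2kπ/(2n+3), 2(k+1)π/(2n+3)] and g_n is the sawtooth function defined above. -/
open Real intervalIntegral

/-!
On `I_k`, write `θ = (k + t) h` with `h = 2π/(2n+3)` and `t ∈ [0, 1]`. Then
`g_n(θ) = (-1)^k (1 - 2t)` and, since `(n + 3/2) h = π`, `cos((n + 3/2)θ) = (-1)^k cos(tπ)`;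
Jordan's inequality `1 - 2t ≤ cos(tπ)` on `[0, 1/2]` (and its reflection `t ↦ 1 - t`) gives
`g_n(θ) cos((n + 3/2)θ) ≥ g_n(θ)²`. As `cos(θ/2)` is at least its nonnegative value at the right
endpoint of `I_k`, the integral is at least `cos((k+1)π/(2n+3)) ∫_{I_k} g_n² = cos((k+1)π/(2n+3)) h/3`.
-/

open Set

lemma one_sub_two_mul_le_cos_mul_pi {t : ℝ} (h0 : 0 ≤ t) (h1 : t ≤ 1 / 2) :
    1 - 2 * t ≤ cos (t * π) := by
  have := one_sub_mul_le_cos (x := t * π) (by positivity) (by nlinarith [pi_pos])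
  rwa [show 2 / π * (t * π) = 2 * t by field_simp] at this

lemma sq_one_sub_two_mul_le_mul_cos_mul_pi {t : ℝ} (h0 : 0 ≤ t) (h1 : t ≤ 1) :
    (1 - 2 * t) ^ 2 ≤ (1 - 2 * t) * cos (t * π) := by
  rcases le_total t (1 / 2) with ht | ht
  · nlinarith [one_sub_two_mul_le_cos_mul_pi h0 ht]
  · have hcos : cos (t * π) = -cos ((1 - t) * π) := by
      rw [← cos_pi_sub]; ring_nf
    nlinarith [one_sub_two_mul_le_cos_mul_pi (t := 1 - t) (by linarith) (by linarith)]

lemma integral_one_sub_two_mul_div_sub_sq {h : ℝ} (hh : 0 < h) (c : ℝ) :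
    ∫ θ in c * h..(c + 1) * h, (1 - 2 * (θ / h - c)) ^ 2 = h / 3 := by
  rw [integral_comp_div_sub (fun u => (1 - 2 * u) ^ 2) hh.ne',
    integral_comp_sub_mul (fun x => x ^ 2) two_ne_zero]
  field_simp
  norm_num [integral_pow]
  ring

noncomputable def sawtoothStep (n : ℕ) : ℝ := 2 * π / (2 * n + 3)

lemma sawtoothStep_pos (n : ℕ) : 0 < sawtoothStep n := by
  unfold sawtoothStep; positivity

lemma sawtooth_eq_of_mem_Icc {n k : ℕ} (hk : k ≤ n) {θ : ℝ}
    (hθ : θ ∈ Icc (k * sawtoothStep n) ((k + 1) * sawtoothStep n)) :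
    sawtooth n θ = (-1) ^ k * (1 - 2 * (θ / sawtoothStep n - k)) := by
  have hh := sawtoothStep_pos n
  have hθn : θ ≤ (n + 1) * sawtoothStep n := hθ.2.trans (by gcongr)
  rw [sawtooth, ← sawtoothStep, if_pos hθn]
  rcases hθ.2.eq_or_lt with hθk | hθk
  · have hq : θ / sawtoothStep n = ((k + 1 : ℕ) : ℤ) := by
      rw [hθk, mul_div_cancel_right₀ _ hh.ne']; push_cast; ring
    rw [hq, Int.floor_intCast, zpow_natCast]
    push_cast
    ring
  · have hfloor : ⌊θ / sawtoothStep n⌋ = k := by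
      rw [Int.floor_eq_iff, le_div_iff₀ hh, div_lt_iff₀ hh]
      exact ⟨by exact_mod_cast hθ.1, by exact_mod_cast hθk⟩
    rw [hfloor, zpow_natCast]
    push_cast
    rfl

lemma continuousOn_sawtooth {n k : ℕ} (hk : k ≤ n) :
    ContinuousOn (sawtooth n) (Icc (k * sawtoothStep n) ((k + 1) * sawtoothStep n)) :=
  (by fun_prop : Continuous fun θ => (-1 : ℝ) ^ k * (1 - 2 * (θ / sawtoothStep n - k)))
    |>.continuousOn.congr fun _ hθ => sawtooth_eq_of_mem_Icc hk hθ

lemma integral_sawtooth_sq {n k : ℕ} (hk : k ≤ n) :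
    ∫ θ in k * sawtoothStep n..(k + 1) * sawtoothStep n, sawtooth n θ ^ 2 =
      sawtoothStep n / 3 := by
  have hh := sawtoothStep_pos n
  rw [← integral_one_sub_two_mul_div_sub_sq hh k]
  refine integral_congr fun θ hθ => ?_
  rw [uIcc_of_le (by gcongr; linarith)] at hθ
  rw [sawtooth_eq_of_mem_Icc hk hθ, mul_pow, pow_right_comm, neg_one_sq, one_pow, one_mul]

-- `(n + 3/2) · sawtoothStep n = π` turns the shift by `k` nodes into a shift by `kπ`.
lemma cos_mul_eq_neg_one_pow_mul_cos (n k : ℕ) (θ : ℝ) :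
    cos ((n + 3 / 2) * θ) = (-1) ^ k * cos ((θ / sawtoothStep n - k) * π) := by
  rw [← cos_add_nat_mul_pi]
  congr 1
  unfold sawtoothStep
  field_simp
  ring

lemma sawtooth_sq_le_sawtooth_mul_cos {n k : ℕ} (hk : k ≤ n) {θ : ℝ}
    (hθ : θ ∈ Icc (k * sawtoothStep n) ((k + 1) * sawtoothStep n)) :
    sawtooth n θ ^ 2 ≤ sawtooth n θ * cos ((n + 3 / 2) * θ) := by
  have hh := sawtoothStep_pos n
  rw [sawtooth_eq_of_mem_Icc hk hθ, cos_mul_eq_neg_one_pow_mul_cos n k θ]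
  have ht0 : 0 ≤ θ / sawtoothStep n - k := by
    rw [sub_nonneg, le_div_iff₀ hh]; exact hθ.1
  have ht1 : θ / sawtoothStep n - k ≤ 1 := by
    rw [sub_le_iff_le_add, div_le_iff₀ hh]; linarith [hθ.2]
  have hsign : ((-1 : ℝ) ^ k) ^ 2 = 1 := by rw [pow_right_comm, neg_one_sq, one_pow]
  calc _ = ((-1 : ℝ) ^ k) ^ 2 * (1 - 2 * (θ / sawtoothStep n - k)) ^ 2 := by ring
    _ ≤ ((-1 : ℝ) ^ k) ^ 2 * ((1 - 2 * (θ / sawtoothStep n - k)) *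
          cos ((θ / sawtoothStep n - k) * π)) := by
      rw [hsign, one_mul, one_mul]; exact sq_one_sub_two_mul_le_mul_cos_mul_pi ht0 ht1
    _ = _ := by ring

lemma cos_succ_mul_pi_div_nonneg {n k : ℕ} (hk : k ≤ n) : 0 ≤ cos ((k + 1) * π / (2 * n + 3)) := by
  have hk' : (k : ℝ) ≤ n := by exact_mod_cast hk
  apply cos_nonneg_of_mem_Icc
  constructor
  · linarith [show 0 ≤ (k + 1) * π / (2 * n + 3) by positivity, pi_pos]
  · rw [div_le_div_iff₀ (by positivity) two_pos]; nlinarith [pi_pos]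

lemma cos_le_cos_half_of_mem_Icc {n k : ℕ} (hk : k ≤ n) {θ : ℝ}
    (hθ : θ ∈ Icc (k * sawtoothStep n) ((k + 1) * sawtoothStep n)) :
    cos ((k + 1) * π / (2 * n + 3)) ≤ cos (θ / 2) := by
  have hh := sawtoothStep_pos n
  have hk' : (k : ℝ) ≤ n := by exact_mod_cast hk
  have hright : (k + 1) * sawtoothStep n / 2 = (k + 1) * π / (2 * n + 3) := by
    unfold sawtoothStep; ring
  apply cos_le_cos_of_nonneg_of_le_pi
  · linarith [hθ.1, show 0 ≤ (k : ℝ) * sawtoothStep n by positivity]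
  · rw [div_le_iff₀ (by positivity)]; nlinarith [pi_pos]
  · linarith [hθ.2]

theorem sawtooth_cos_integral_lower_bound_general (n : ℕ) (k : ℕ) (hk : k ≤ n) :
    ∫ θ in (2 * k * Real.pi / (2 * n + 3))..(2 * (k + 1) * Real.pi / (2 * n + 3)),
        sawtooth n θ * Real.cos ((n + 3 / 2) * θ) * Real.cos (θ / 2) ≥
      2 * Real.pi / (3 * (2 * n + 3)) * Real.cos ((k + 1) * Real.pi / (2 * n + 3)) := by
  have hI : ∀ j : ℝ, 2 * j * π / (2 * n + 3) = j * sawtoothStep n := fun j => by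
    unfold sawtoothStep; ring
  rw [hI, hI, ge_iff_le]
  set C := cos ((k + 1) * π / (2 * n + 3))
  have hle : (k : ℝ) * sawtoothStep n ≤ (k + 1) * sawtoothStep n :=
    mul_le_mul_of_nonneg_right (by linarith) (sawtoothStep_pos n).le
  have hcont := continuousOn_sawtooth hk
  have hpointwise : ∀ θ ∈ Icc (k * sawtoothStep n) ((k + 1) * sawtoothStep n),
      C * sawtooth n θ ^ 2 ≤ sawtooth n θ * cos ((n + 3 / 2) * θ) * cos (θ / 2) := fun θ hθ =>
    calc C * sawtooth n θ ^ 2 ≤ cos (θ / 2) * sawtooth n θ ^ 2 := by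
          gcongr; exact cos_le_cos_half_of_mem_Icc hk hθ
      _ ≤ cos (θ / 2) * (sawtooth n θ * cos ((n + 3 / 2) * θ)) := by
          gcongr
          · exact (cos_succ_mul_pi_div_nonneg hk).trans (cos_le_cos_half_of_mem_Icc hk hθ)
          · exact sawtooth_sq_le_sawtooth_mul_cos hk hθ
      _ = _ := by ring
  calc 2 * π / (3 * (2 * n + 3)) * C
      = ∫ θ in k * sawtoothStep n..(k + 1) * sawtoothStep n, C * sawtooth n θ ^ 2 := by
        rw [integral_const_mul, integral_sawtooth_sq hk, sawtoothStep]; field_simp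
    _ ≤ _ := integral_mono_on hle
        (ContinuousOn.intervalIntegrable (by rw [uIcc_of_le hle]; fun_prop))
        (ContinuousOn.intervalIntegrable (by rw [uIcc_of_le hle]; fun_prop)) hpointwise

theorem sawtooth_cos_integral_lower_bound (n : ℕ) (hn : 2 ≤ n) (k : ℕ) (hk : k ≤ n) :
    ∫ θ in (2 * k * Real.pi / (2 * n + 3))..(2 * (k + 1) * Real.pi / (2 * n + 3)),
        sawtooth n θ * Real.cos ((n + 3 / 2) * θ) * Real.cos (θ / 2) ≥
      2 * Real.pi / (3 * (2 * n + 3)) * Real.cos ((k + 1) * Real.pi / (2 * n + 3)) :=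
  sawtooth_cos_integral_lower_bound_general n k hk
end
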